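/- Amplitude factorization of the Toda trajectory: let Λ be a diagonal n×n complex matrix, Z a strictly lower triangular n×n complex matrix, and u₀ ∈ U a matrix admitting a factorization l₀ = k₀·u₀ with l₀ ∈ L and k₀ unitary; set X := u₀·(Λ+Z)·u₀⁻¹. Then for every t ∈ ℝ: (a) there exist a unitary k(t) and l(t) ∈ L such that u₀·exp(t·(Λ+Z)) = k(t)·l(t)·exp(t·ReΛ); (b) writing l(t) = q(t)·r(t) with q(t) unitary and r(t) ∈ U, the matrix Q(t) := k(t)·q(t) is unitary, R(t) := r(t)·exp(t·ReΛ)·u₀⁻¹ lies in U, exp(t·X) = Q(t)·R(t), and R(t)·X·R(t)⁻¹ = r(t)·(Λ + exp(t·ReΛ)·Z·exp(−t·ReΛ))·r(t)⁻¹. -/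

import Mathlib

open Matrix

/-- `L`: lower unitriangular `n × n` complex matrices. -/
def IsLowerUni {n : ℕ} (l : Matrix (Fin n) (Fin n) ℂ) : Prop :=
  (∀ i, l i i = 1) ∧ ∀ i j : Fin n, i < j → l i j = 0

/-- `U`: upper triangular `n × n` complex matrices with strictly positive real diagonal. -/
def IsUpperPos {n : ℕ} (u : Matrix (Fin n) (Fin n) ℂ) : Prop :=
  (∀ i, 0 < (u i i).re ∧ (u i i).im = 0) ∧ ∀ i j : Fin n, j < i → u i j = 0

/-- A matrix is unitary if `k* · k = 1`. -/
def IsUnitaryMat {n : ℕ} (k : Matrix (Fin n) (Fin n) ℂ) : Prop :=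
  kᴴ * k = 1

/-- The leading principal minor of order `m`: the determinant of the top-left
`m × m` submatrix. -/
def leadMinor {n : ℕ} (A : Matrix (Fin n) (Fin n) ℂ) (m : ℕ) (h : m ≤ n) : ℂ :=
  (A.submatrix (Fin.castLE h) (Fin.castLE h)).det


/-- A matrix is strictly lower triangular if all entries on or above the diagonal vanish. -/
def IsStrictLower {n : ℕ} (Y : Matrix (Fin n) (Fin n) ℂ) : Prop :=
  ∀ i j : Fin n, i ≤ j → Y i j = 0

private def LowT {n : ℕ} (A : Matrix (Fin n) (Fin n) ℂ) : Prop := ∀ i j : Fin n, i < j → A i j = 0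

private lemma lowT_mul {n : ℕ} {A B : Matrix (Fin n) (Fin n) ℂ} (hA : LowT A) (hB : LowT B) :
    LowT (A * B) := by
  intro i j hij
  rw [Matrix.mul_apply]
  refine Finset.sum_eq_zero fun k _ => ?_
  rcases lt_or_ge i k with h | h
  · rw [hA i k h, zero_mul]
  · rw [hB k j (lt_of_le_of_lt h hij), mul_zero]

private lemma lowT_mul_diag {n : ℕ} {A B : Matrix (Fin n) (Fin n) ℂ} (hA : LowT A) (hB : LowT B)
    (i : Fin n) : (A * B) i i = A i i * B i i := by
  rw [Matrix.mul_apply]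
  refine Finset.sum_eq_single i (fun k _ hk => ?_) (fun h => absurd (Finset.mem_univ i) h)
  rcases lt_or_ge i k with h | h
  · rw [hA i k h, zero_mul]
  · rw [hB k i (lt_of_le_of_ne h hk), mul_zero]

private lemma lowT_one {n : ℕ} : LowT (1 : Matrix (Fin n) (Fin n) ℂ) := by
  intro i j hij
  exact Matrix.one_apply_ne (ne_of_lt hij)

private lemma lowT_pow {n : ℕ} {A : Matrix (Fin n) (Fin n) ℂ} (hA : LowT A) (m : ℕ) :
    LowT (A ^ m) := by
  induction m with
  | zero => simpa using lowT_one
  | succ m ih => rw [pow_succ]; exact lowT_mul ih hA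

private lemma lowT_pow_diag {n : ℕ} {A : Matrix (Fin n) (Fin n) ℂ} (hA : LowT A) (m : ℕ)
    (i : Fin n) : (A ^ m) i i = (A i i) ^ m := by
  induction m with
  | zero => simp [Matrix.one_apply_eq]
  | succ m ih => rw [pow_succ, lowT_mul_diag (lowT_pow hA m) hA, ih, pow_succ]

private lemma exp_lowT {n : ℕ} {A : Matrix (Fin n) (Fin n) ℂ} (hA : LowT A) :
    LowT (NormedSpace.exp A) ∧
      ∀ i, NormedSpace.exp A i i = Complex.exp (A i i) := by
  letI : SeminormedRing (Matrix (Fin n) (Fin n) ℂ) := Matrix.linftyOpSemiNormedRing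
  letI : NormedRing (Matrix (Fin n) (Fin n) ℂ) := Matrix.linftyOpNormedRing
  letI : NormedAlgebra ℂ (Matrix (Fin n) (Fin n) ℂ) := Matrix.linftyOpNormedAlgebra
  have hsum : HasSum (fun m : ℕ => (m.factorial⁻¹ : ℂ) • A ^ m) (NormedSpace.exp A) := by
    rw [NormedSpace.exp_eq_tsum ℂ]
    exact (NormedSpace.expSeries_summable' (𝕂 := ℂ) A).hasSum
  have hcoord : ∀ i j : Fin n,
      HasSum (fun m : ℕ => (m.factorial⁻¹ : ℂ) * (A ^ m) i j) (NormedSpace.exp A i j) := by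
    intro i j
    have hc : Continuous fun M : Matrix (Fin n) (Fin n) ℂ => M i j :=
      (continuous_apply j).comp (continuous_apply i)
    have := hsum.map (AddMonoidHom.mk' (fun M : Matrix (Fin n) (Fin n) ℂ => M i j)
      (fun _ _ => rfl)) hc
    exact this
  constructor
  · intro i j hij
    have h0 : HasSum (fun m : ℕ => (m.factorial⁻¹ : ℂ) * (A ^ m) i j) 0 := by
      convert hasSum_zero with m
      rw [lowT_pow hA m i j hij, mul_zero]
    exact (hcoord i j).unique h0
  · intro i
    have h1 : HasSum (fun m : ℕ => (m.factorial⁻¹ : ℂ) * (A i i) ^ m)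
        (NormedSpace.exp A i i) := by
      have := hcoord i i
      simpa [lowT_pow_diag hA] using this
    have h2 : HasSum (fun m : ℕ => (m.factorial⁻¹ : ℂ) * (A i i) ^ m)
        (Complex.exp (A i i)) := by
      have h := (NormedSpace.expSeries_summable' (𝕂 := ℂ) (A i i)).hasSum
      have he : NormedSpace.exp (A i i) = ∑' m : ℕ, (m.factorial⁻¹ : ℂ) • (A i i) ^ m := by
        rw [NormedSpace.exp_eq_tsum ℂ]
      rw [← he] at h
      simpa [Complex.exp_eq_exp_ℂ, smul_eq_mul] using h
    exact h1.unique h2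


section UP
variable {n : ℕ}

private def UppT (A : Matrix (Fin n) (Fin n) ℂ) : Prop := ∀ i j : Fin n, j < i → A i j = 0

private lemma uppT_mul {A B : Matrix (Fin n) (Fin n) ℂ} (hA : UppT A) (hB : UppT B) :
    UppT (A * B) := by
  intro i j hij
  rw [Matrix.mul_apply]
  refine Finset.sum_eq_zero fun k _ => ?_
  rcases lt_or_ge k i with h | h
  · rw [hA i k h, zero_mul]
  · rw [hB k j (lt_of_lt_of_le hij h), mul_zero]

private lemma uppT_mul_diag {A B : Matrix (Fin n) (Fin n) ℂ} (hA : UppT A) (hB : UppT B)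
    (i : Fin n) : (A * B) i i = A i i * B i i := by
  rw [Matrix.mul_apply]
  refine Finset.sum_eq_single i (fun k _ hk => ?_) (fun h => absurd (Finset.mem_univ i) h)
  rcases lt_or_ge k i with h | h
  · rw [hA i k h, zero_mul]
  · rw [hB k i (lt_of_le_of_ne h (Ne.symm hk)), mul_zero]

private lemma isUpperPos_mul {A B : Matrix (Fin n) (Fin n) ℂ} (hA : IsUpperPos A)
    (hB : IsUpperPos B) : IsUpperPos (A * B) := by
  refine ⟨fun i => ?_, uppT_mul hA.2 hB.2⟩
  rw [uppT_mul_diag hA.2 hB.2]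
  obtain ⟨ha, ha'⟩ := hA.1 i
  obtain ⟨hb, hb'⟩ := hB.1 i
  constructor
  · rw [Complex.mul_re, ha', hb']
    simpa using mul_pos ha hb
  · rw [Complex.mul_im, ha', hb']
    simp

private lemma isUpperPos_det {A : Matrix (Fin n) (Fin n) ℂ} (hA : IsUpperPos A) :
    IsUnit A.det := by
  have hBT : A.BlockTriangular id := fun i j h => hA.2 i j h
  rw [Matrix.det_of_upperTriangular hBT]
  refine isUnit_iff_ne_zero.mpr (Finset.prod_ne_zero_iff.mpr fun i _ => ?_)
  intro h
  simpa [h] using (hA.1 i).1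

private lemma isUpperPos_inv {A : Matrix (Fin n) (Fin n) ℂ} (hA : IsUpperPos A) :
    IsUpperPos A⁻¹ := by
  have hdet := isUpperPos_det hA
  have hBT : A.BlockTriangular id := fun i j h => hA.2 i j h
  haveI := A.invertibleOfIsUnitDet hdet
  have hBTinv : A⁻¹.BlockTriangular id := Matrix.blockTriangular_inv_of_blockTriangular hBT
  have hinvT : UppT A⁻¹ := fun i j h => hBTinv h
  refine ⟨fun i => ?_, hinvT⟩
  have h1 : (A * A⁻¹) i i = A i i * A⁻¹ i i := uppT_mul_diag hA.2 hinvT i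
  rw [Matrix.mul_nonsing_inv A hdet, Matrix.one_apply_eq] at h1
  have hd : A⁻¹ i i = (A i i)⁻¹ := (inv_eq_of_mul_eq_one_right h1.symm).symm
  obtain ⟨hre, him⟩ := hA.1 i
  have hAii : A i i = ((A i i).re : ℂ) := Complex.ext (by simp) (by simp [him])
  rw [hd, hAii, ← Complex.ofReal_inv]
  constructor
  · simpa using inv_pos.mpr hre
  · simp
end UP



/-- Amplitude factorization of the Toda trajectory: with `X = u₀·(Λ+Z)·u₀⁻¹`,
`l₀ = k₀·u₀`, for each `t` there are a unitary `k(t)` and `l(t) ∈ L` with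
`u₀·exp(t·(Λ+Z)) = k(t)·l(t)·exp(t·ReΛ)`; and for any such factorization and any QR
split `l = q·r`, `Q = k·q` is unitary, `R = r·exp(t·ReΛ)·u₀⁻¹ ∈ U`, `exp(t·X) = Q·R`,
and `R·X·R⁻¹ = r·(Λ + exp(t·ReΛ)·Z·exp(−t·ReΛ))·r⁻¹`. -/
theorem stmt16 (n : ℕ) (hn : 0 < n) (d : Fin n → ℂ)
    (Λ ReΛ Z X k₀ l₀ u₀ : Matrix (Fin n) (Fin n) ℂ)
    (hΛ : Λ = Matrix.diagonal d)
    (hRe : ReΛ = Matrix.diagonal fun j => ((d j).re : ℂ))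
    (hZ : IsStrictLower Z)
    (hu₀ : IsUpperPos u₀) (hl₀ : IsLowerUni l₀) (hk₀ : IsUnitaryMat k₀)
    (hfac : l₀ = k₀ * u₀)
    (hX : X = u₀ * (Λ + Z) * u₀⁻¹) (t : ℝ) :
    (∃ k l : Matrix (Fin n) (Fin n) ℂ, IsUnitaryMat k ∧ IsLowerUni l ∧
        u₀ * NormedSpace.exp ((t : ℂ) • (Λ + Z)) =
          k * l * NormedSpace.exp ((t : ℂ) • ReΛ)) ∧
    (∀ k l q r : Matrix (Fin n) (Fin n) ℂ,
      IsUnitaryMat k → IsLowerUni l →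
      u₀ * NormedSpace.exp ((t : ℂ) • (Λ + Z)) =
        k * l * NormedSpace.exp ((t : ℂ) • ReΛ) →
      IsUnitaryMat q → IsUpperPos r → l = q * r →
      IsUnitaryMat (k * q) ∧
      IsUpperPos (r * NormedSpace.exp ((t : ℂ) • ReΛ) * u₀⁻¹) ∧
      NormedSpace.exp ((t : ℂ) • X) =
        (k * q) * (r * NormedSpace.exp ((t : ℂ) • ReΛ) * u₀⁻¹) ∧
      (r * NormedSpace.exp ((t : ℂ) • ReΛ) * u₀⁻¹) * X
          * (r * NormedSpace.exp ((t : ℂ) • ReΛ) * u₀⁻¹)⁻¹ =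
        r * (Λ + NormedSpace.exp ((t : ℂ) • ReΛ) * Z
            * NormedSpace.exp ((-(t : ℂ)) • ReΛ)) * r⁻¹) := by

  -- basic diagonal entry functions
  have hexpC : ∀ z : ℂ, NormedSpace.exp z = Complex.exp z := fun z => by
    rw [← Complex.exp_eq_exp_ℂ]
  have hsmulRe : (t : ℂ) • ReΛ = Matrix.diagonal (fun j => (t : ℂ) * ((d j).re : ℂ)) := by
    rw [hRe, ← Matrix.diagonal_smul]
    rfl
  have hE : NormedSpace.exp ((t : ℂ) • ReΛ)
      = Matrix.diagonal (fun j => Complex.exp ((t : ℂ) * ((d j).re : ℂ))) := by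
    rw [hsmulRe, Matrix.exp_diagonal, Pi.exp_def]
    simp only [hexpC]
  have hEE' : NormedSpace.exp ((t : ℂ) • ReΛ) * NormedSpace.exp ((-(t : ℂ)) • ReΛ) = 1 := by
    have hc : Commute ((t : ℂ) • ReΛ) (-((t : ℂ) • ReΛ)) := (Commute.refl _).neg_right
    have h := Matrix.exp_add_of_commute _ _ hc
    rw [add_neg_cancel, NormedSpace.exp_zero] at h
    rw [neg_smul]
    exact h.symm
  -- Part (a)
  obtain ⟨θ, hθdef⟩ : ∃ θ : Fin n → ℂ,
      θ = fun j => Complex.exp ((t : ℂ) * d j - (t : ℂ) * ((d j).re : ℂ)) := ⟨_, rfl⟩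
  have hθ : ∀ j, star (θ j) * θ j = 1 := by
    intro j
    rw [hθdef]
    show (starRingEnd ℂ) _ * _ = 1
    rw [← Complex.exp_conj, ← Complex.exp_add]
    rw [show (starRingEnd ℂ) ((t : ℂ) * d j - (t : ℂ) * ((d j).re : ℂ))
        + ((t : ℂ) * d j - (t : ℂ) * ((d j).re : ℂ)) = 0 from ?_, Complex.exp_zero]
    simp only [map_sub, _root_.map_mul, Complex.conj_ofReal]
    have hc := Complex.add_conj (d j)
    push_cast at hc
    linear_combination (t : ℂ) * hc
  have hθe : ∀ j, θ j * Complex.exp ((t : ℂ) * ((d j).re : ℂ)) = Complex.exp ((t : ℂ) * d j) := by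
    intro j
    rw [hθdef, ← Complex.exp_add, sub_add_cancel]
  -- triangular structure of B = exp (t • (Λ + Z))
  have hAlow : LowT ((t : ℂ) • (Λ + Z)) := by
    intro i j hij
    rw [hΛ]
    simp [Matrix.smul_apply, Matrix.add_apply,
      Matrix.diagonal_apply_ne _ (ne_of_lt hij), hZ i j hij.le]
  obtain ⟨hBlow, hBdiag0⟩ := exp_lowT hAlow
  have hBdiag : ∀ i, NormedSpace.exp ((t : ℂ) • (Λ + Z)) i i = Complex.exp ((t : ℂ) * d i) := by
    intro i
    rw [hBdiag0 i]
    congr 1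
    rw [hΛ]
    simp [Matrix.smul_apply, Matrix.add_apply, hZ i i le_rfl]
  have parta : ∃ k l : Matrix (Fin n) (Fin n) ℂ, IsUnitaryMat k ∧ IsLowerUni l ∧
      u₀ * NormedSpace.exp ((t : ℂ) • (Λ + Z)) =
        k * l * NormedSpace.exp ((t : ℂ) • ReΛ) := by
    refine ⟨k₀ᴴ * Matrix.diagonal θ,
      Matrix.diagonal (star θ) *
        (l₀ * NormedSpace.exp ((t : ℂ) • (Λ + Z)) *
          Matrix.diagonal (fun j => (Complex.exp ((t : ℂ) * d j))⁻¹)) * Matrix.diagonal θ,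
      ?_, ⟨?_, ?_⟩, ?_⟩
    · show (k₀ᴴ * Matrix.diagonal θ)ᴴ * (k₀ᴴ * Matrix.diagonal θ) = 1
      rw [Matrix.conjTranspose_mul, Matrix.conjTranspose_conjTranspose,
        Matrix.diagonal_conjTranspose]
      calc Matrix.diagonal (star θ) * k₀ * (k₀ᴴ * Matrix.diagonal θ)
          = Matrix.diagonal (star θ) * (k₀ * k₀ᴴ) * Matrix.diagonal θ := by
            simp only [Matrix.mul_assoc]
        _ = 1 := by
            rw [mul_eq_one_comm.mp (hk₀ : k₀ᴴ * k₀ = 1), Matrix.mul_one,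
              Matrix.diagonal_mul_diagonal,
              show (fun i => (star θ) i * θ i) = fun _ => (1 : ℂ) from funext fun j => hθ j,
              Matrix.diagonal_one]
    · intro i
      rw [Matrix.mul_diagonal, Matrix.diagonal_mul]
      have h1 : (l₀ * NormedSpace.exp ((t : ℂ) • (Λ + Z)) *
          Matrix.diagonal (fun j => (Complex.exp ((t : ℂ) * d j))⁻¹)) i i = 1 := by
        rw [Matrix.mul_diagonal, lowT_mul_diag hl₀.2 hBlow, hl₀.1 i, hBdiag i, one_mul,
          mul_inv_cancel₀ (Complex.exp_ne_zero _)]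
      rw [h1, mul_one]
      exact hθ i
    · intro i j hij
      rw [Matrix.mul_diagonal, Matrix.diagonal_mul]
      have h0 : (l₀ * NormedSpace.exp ((t : ℂ) • (Λ + Z)) *
          Matrix.diagonal (fun j => (Complex.exp ((t : ℂ) * d j))⁻¹)) i j = 0 := by
        rw [Matrix.mul_diagonal, lowT_mul hl₀.2 hBlow i j hij, zero_mul]
      rw [h0, mul_zero, zero_mul]
    · have hk₀l₀ : k₀ᴴ * l₀ = u₀ := by
        rw [hfac, ← Matrix.mul_assoc, (hk₀ : k₀ᴴ * k₀ = 1), Matrix.one_mul]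
      have hΘΘb : Matrix.diagonal θ * Matrix.diagonal (star θ) = 1 := by
        rw [Matrix.diagonal_mul_diagonal,
          show (fun i => θ i * (star θ) i) = fun _ => (1 : ℂ) from funext fun j => by
            rw [mul_comm]; exact hθ j,
          Matrix.diagonal_one]
      have hGE : Matrix.diagonal (fun j => (Complex.exp ((t : ℂ) * d j))⁻¹) *
          (Matrix.diagonal θ *
            Matrix.diagonal (fun j => Complex.exp ((t : ℂ) * ((d j).re : ℂ)))) = 1 := by
        simp only [Matrix.diagonal_mul_diagonal]
        rw [show (fun i => (Complex.exp ((t : ℂ) * d i))⁻¹ *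
              (θ i * Complex.exp ((t : ℂ) * ((d i).re : ℂ)))) = fun _ => (1 : ℂ) from
            funext fun j => by rw [hθe j]; exact inv_mul_cancel₀ (Complex.exp_ne_zero _),
          Matrix.diagonal_one]
      rw [hE]
      have hassoc : (k₀ᴴ * Matrix.diagonal θ) *
          (Matrix.diagonal (star θ) *
            (l₀ * NormedSpace.exp ((t : ℂ) • (Λ + Z)) *
              Matrix.diagonal (fun j => (Complex.exp ((t : ℂ) * d j))⁻¹)) * Matrix.diagonal θ) *
          Matrix.diagonal (fun j => Complex.exp ((t : ℂ) * ((d j).re : ℂ)))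
          = k₀ᴴ * (Matrix.diagonal θ * Matrix.diagonal (star θ)) *
            (l₀ * NormedSpace.exp ((t : ℂ) • (Λ + Z))) *
            (Matrix.diagonal (fun j => (Complex.exp ((t : ℂ) * d j))⁻¹) *
              (Matrix.diagonal θ *
                Matrix.diagonal (fun j => Complex.exp ((t : ℂ) * ((d j).re : ℂ))))) := by
        simp only [Matrix.mul_assoc]
      rw [hassoc, hΘΘb, Matrix.mul_one, hGE, Matrix.mul_one, ← Matrix.mul_assoc, hk₀l₀]

  -- Part (b)
  have hdetu : IsUnit u₀.det := isUpperPos_det hu₀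
  have hu : IsUnit u₀ := (Matrix.isUnit_iff_isUnit_det u₀).mpr hdetu
  have hEpos : IsUpperPos (NormedSpace.exp ((t : ℂ) • ReΛ)) := by
    rw [hE]
    constructor
    · intro i
      have hcast : ((t : ℂ) * ((d i).re : ℂ)) = ((t * (d i).re : ℝ) : ℂ) := by push_cast; ring
      rw [Matrix.diagonal_apply_eq, hcast]
      exact ⟨by rw [Complex.exp_ofReal_re]; exact Real.exp_pos _,
        Complex.exp_ofReal_im _⟩
    · intro i j hij
      exact Matrix.diagonal_apply_ne _ (ne_of_lt hij).symm
  have hcanc : ∀ M : Matrix (Fin n) (Fin n) ℂ, u₀⁻¹ * (u₀ * M) = M := fun M => by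
    rw [← Matrix.mul_assoc, Matrix.nonsing_inv_mul u₀ hdetu, Matrix.one_mul]
  have hEinv : NormedSpace.exp ((-(t : ℂ)) • ReΛ)
      = (NormedSpace.exp ((t : ℂ) • ReΛ))⁻¹ := by
    rw [neg_smul, Matrix.exp_neg]
  have hEΛ : NormedSpace.exp ((t : ℂ) • ReΛ) * Λ = Λ * NormedSpace.exp ((t : ℂ) • ReΛ) := by
    rw [hE, hΛ, Matrix.diagonal_mul_diagonal, Matrix.diagonal_mul_diagonal,
      show (fun i => Complex.exp ((t : ℂ) * ((d i).re : ℂ)) * d i)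
          = fun i => d i * Complex.exp ((t : ℂ) * ((d i).re : ℂ)) from
        funext fun j => mul_comm _ _]
  have hconj : (t : ℂ) • X = u₀ * ((t : ℂ) • (Λ + Z)) * u₀⁻¹ := by
    rw [hX, Matrix.mul_smul, Matrix.smul_mul]
  have hexpconj : NormedSpace.exp ((t : ℂ) • X)
      = u₀ * NormedSpace.exp ((t : ℂ) • (Λ + Z)) * u₀⁻¹ := by
    rw [hconj]
    exact Matrix.exp_conj u₀ _ hu
  refine ⟨parta, ?_⟩
  intro k l q r hkU hlL heq hqU hrU hqr
  have hb1 : IsUnitaryMat (k * q) := by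
    show (k * q)ᴴ * (k * q) = 1
    rw [Matrix.conjTranspose_mul]
    calc qᴴ * kᴴ * (k * q) = qᴴ * (kᴴ * k) * q := by simp only [Matrix.mul_assoc]
      _ = 1 := by rw [(hkU : kᴴ * k = 1), Matrix.mul_one, (hqU : qᴴ * q = 1)]
  have hb2 : IsUpperPos (r * NormedSpace.exp ((t : ℂ) • ReΛ) * u₀⁻¹) :=
    isUpperPos_mul (isUpperPos_mul hrU hEpos) (isUpperPos_inv hu₀)
  have hb3 : NormedSpace.exp ((t : ℂ) • X)
      = (k * q) * (r * NormedSpace.exp ((t : ℂ) • ReΛ) * u₀⁻¹) := by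
    rw [hexpconj, heq, hqr]
    simp only [Matrix.mul_assoc]
  have hRinv : (r * NormedSpace.exp ((t : ℂ) • ReΛ) * u₀⁻¹)⁻¹
      = u₀ * (NormedSpace.exp ((-(t : ℂ)) • ReΛ) * r⁻¹) := by
    rw [Matrix.mul_inv_rev, Matrix.mul_inv_rev, Matrix.nonsing_inv_nonsing_inv u₀ hdetu, ← hEinv]
  have hmid : NormedSpace.exp ((t : ℂ) • ReΛ) * ((Λ + Z) * NormedSpace.exp ((-(t : ℂ)) • ReΛ))
      = Λ + NormedSpace.exp ((t : ℂ) • ReΛ) * Z * NormedSpace.exp ((-(t : ℂ)) • ReΛ) := by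
    rw [Matrix.add_mul, Matrix.mul_add, ← Matrix.mul_assoc, ← Matrix.mul_assoc, hEΛ,
      Matrix.mul_assoc Λ, hEE', Matrix.mul_one]
  refine ⟨hb1, hb2, hb3, ?_⟩
  rw [hX, hRinv]
  calc (r * NormedSpace.exp ((t : ℂ) • ReΛ) * u₀⁻¹) * (u₀ * (Λ + Z) * u₀⁻¹) *
        (u₀ * (NormedSpace.exp ((-(t : ℂ)) • ReΛ) * r⁻¹))
      = r * (NormedSpace.exp ((t : ℂ) • ReΛ) *
          (u₀⁻¹ * (u₀ * ((Λ + Z) *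
            (u₀⁻¹ * (u₀ * (NormedSpace.exp ((-(t : ℂ)) • ReΛ) * r⁻¹))))))) := by
        simp only [Matrix.mul_assoc]
    _ = r * (NormedSpace.exp ((t : ℂ) • ReΛ) *
          ((Λ + Z) * (NormedSpace.exp ((-(t : ℂ)) • ReΛ) * r⁻¹))) := by
        rw [hcanc, hcanc]
    _ = r * ((Λ + NormedSpace.exp ((t : ℂ) • ReΛ) * Z *
          NormedSpace.exp ((-(t : ℂ)) • ReΛ)) * r⁻¹) := by
        rw [show NormedSpace.exp ((t : ℂ) • ReΛ) *
            ((Λ + Z) * (NormedSpace.exp ((-(t : ℂ)) • ReΛ) * r⁻¹))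
            = (NormedSpace.exp ((t : ℂ) • ReΛ) *
              ((Λ + Z) * NormedSpace.exp ((-(t : ℂ)) • ReΛ))) * r⁻¹ from by
          simp only [Matrix.mul_assoc], hmid]
    _ = r * (Λ + NormedSpace.exp ((t : ℂ) • ReΛ) * Z *
          NormedSpace.exp ((-(t : ℂ)) • ReΛ)) * r⁻¹ := (Matrix.mul_assoc _ _ _).symm
  -- done
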